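/- Let β : ℝ → ℝ be C² convex with |β'| ≤ 1 and |β''| bounded, and let f : ℝ → ℝ be Lipschitz with constant L_f. Define F^β(a,b) := ∫_b^a β'(r - b) f'(r) dr. Then there exists a constant C (depending only on L_f and bounds on β) such that for all a, b, c ∈ ℝ: |F^β(a,b) - F^β(a,c)| ≤ C |b - c| (1 + |a - b|). -/

import Mathlib

/-!
Split `F(a,b) - F(a,c)` as `∫_b^a (β'(r-b) - β'(r-c)) f'(r) dr + ∫_b^c β'(r-c) f'(r) dr`.
The first integrand is at most `‖β''‖∞ |b-c| L_f` on an interval of length `|a-b|`, the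
second at most `L_f` on an interval of length `|b-c|`.
-/

open MeasureTheory intervalIntegral

/-- The paper's `F^β(a,b)` is `entropyFlux β' f' a b`. -/
noncomputable def entropyFlux (g h : ℝ → ℝ) (a b : ℝ) : ℝ :=
  ∫ r in b..a, g (r - b) * h r

theorem abs_sub_le_of_abs_deriv_le {g : ℝ → ℝ} {M : ℝ} (hg : Differentiable ℝ g)
    (hg' : ∀ r, |deriv g r| ≤ M) (x y : ℝ) : |g x - g y| ≤ M * |x - y| :=
  Convex.norm_image_sub_le_of_norm_deriv_le (fun r _ => hg r) (fun r _ => hg' r)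
    convex_univ (Set.mem_univ y) (Set.mem_univ x)

namespace entropyFlux

variable {g h : ℝ → ℝ} {K L M : ℝ}

theorem intervalIntegrable_integrand (hg : Measurable g) (hh : Measurable h)
    (hgK : ∀ r, |g r| ≤ K) (hhL : ∀ r, |h r| ≤ L) (d p q : ℝ) :
    IntervalIntegrable (fun r => g (r - d) * h r) volume p q := by
  refine (intervalIntegrable_const (c := K * L)).mono_fun
    ((hg.comp (measurable_id.sub_const d)).mul hh).aestronglyMeasurable.restrict ?_
  filter_upwards with r
  rw [Real.norm_eq_abs, Real.norm_eq_abs, abs_mul]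
  exact (mul_le_mul (hgK _) (hhL r) (abs_nonneg _) ((abs_nonneg _).trans (hgK 0))).trans
    (le_abs_self _)

theorem sub_eq_integral_add_integral {a b c : ℝ}
    (hb : IntervalIntegrable (fun r => g (r - b) * h r) volume b a)
    (hc : ∀ p q, IntervalIntegrable (fun r => g (r - c) * h r) volume p q) :
    entropyFlux g h a b - entropyFlux g h a c =
      (∫ r in b..a, (g (r - b) - g (r - c)) * h r) + ∫ r in b..c, g (r - c) * h r := by
  have hsplit := integral_add_adjacent_intervals (hc b c) (hc c a)
  simp only [entropyFlux, sub_mul, integral_sub hb (hc b a)]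
  linarith

theorem abs_integral_sub_le (hgM : ∀ x y, |g x - g y| ≤ M * |x - y|) (hhL : ∀ r, |h r| ≤ L)
    (a b c : ℝ) :
    |∫ r in b..a, (g (r - b) - g (r - c)) * h r| ≤ M * |b - c| * L * |a - b| := by
  have hM : 0 ≤ M := by simpa using (abs_nonneg _).trans (hgM 1 0)
  rw [← Real.norm_eq_abs]
  refine norm_integral_le_of_norm_le_const fun r _ => ?_
  rw [Real.norm_eq_abs, abs_mul]
  have hshift : |(r - b) - (r - c)| = |b - c| := by rw [abs_sub_comm]; ring_nf
  exact mul_le_mul (hshift ▸ hgM _ _) (hhL r) (abs_nonneg _) (by positivity)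

theorem abs_integral_le (hgK : ∀ r, |g r| ≤ K) (hhL : ∀ r, |h r| ≤ L) (b c : ℝ) :
    |∫ r in b..c, g (r - c) * h r| ≤ K * L * |b - c| := by
  rw [abs_sub_comm b c, ← Real.norm_eq_abs]
  refine norm_integral_le_of_norm_le_const fun r _ => ?_
  rw [Real.norm_eq_abs, abs_mul]
  exact mul_le_mul (hgK _) (hhL r) (abs_nonneg _) ((abs_nonneg _).trans (hgK 0))

theorem abs_sub_le (hg : Measurable g) (hh : Measurable h) (hgK : ∀ r, |g r| ≤ K)
    (hgM : ∀ x y, |g x - g y| ≤ M * |x - y|) (hhL : ∀ r, |h r| ≤ L) (a b c : ℝ) :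
    |entropyFlux g h a b - entropyFlux g h a c| ≤
      L * (K + M) * |b - c| * (1 + |a - b|) := by
  have hint := intervalIntegrable_integrand hg hh hgK hhL
  rw [sub_eq_integral_add_integral (hint b b a) (hint c)]
  have h1 := abs_integral_sub_le hgM hhL a b c
  have h2 := abs_integral_le hgK hhL b c
  have hK : 0 ≤ K := (abs_nonneg _).trans (hgK 0)
  have hL : 0 ≤ L := (abs_nonneg _).trans (hhL 0)
  have hM : 0 ≤ M := by simpa using (abs_nonneg _).trans (hgM 1 0)
  calc _ ≤ M * |b - c| * L * |a - b| + K * L * |b - c| :=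
        (abs_add_le _ _).trans (add_le_add h1 h2)
    _ ≤ L * (K + M) * |b - c| * (1 + |a - b|) := by
      have := mul_nonneg (mul_nonneg hL hK) (mul_nonneg (abs_nonneg (b - c)) (abs_nonneg (a - b)))
      have := mul_nonneg (mul_nonneg hL hM) (abs_nonneg (b - c))
      nlinarith

end entropyFlux

theorem stmt5_general (β : ℝ → ℝ) (hβ : ContDiff ℝ 2 β)
    (hβ' : ∀ r, |deriv β r| ≤ 1)
    (Mβ : ℝ) (hβ'' : ∀ r, |deriv (deriv β) r| ≤ Mβ)
    (L_f : ℝ) (f : ℝ → ℝ)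
    (hf' : ∀ r, |deriv f r| ≤ L_f)
    (Fβ : ℝ → ℝ → ℝ)
    (hFβ : ∀ a b, Fβ a b = ∫ r in b..a, deriv β (r - b) * deriv f r) :
    ∃ C : ℝ, 0 ≤ C ∧ ∀ a b c : ℝ, |Fβ a b - Fβ a c| ≤ C * |b - c| * (1 + |a - b|) := by
  have hβ₁ : Differentiable ℝ (deriv β) := by
    simpa only [iteratedDeriv_one] using hβ.differentiable_iteratedDeriv 1 (by norm_num)
  have hLip := abs_sub_le_of_abs_deriv_le hβ₁ hβ''
  have hL : 0 ≤ L_f := (abs_nonneg _).trans (hf' 0)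
  have hM : 0 ≤ Mβ := (abs_nonneg _).trans (hβ'' 0)
  refine ⟨L_f * (1 + Mβ), by positivity, fun a b c => ?_⟩
  simpa only [hFβ, entropyFlux] using
    entropyFlux.abs_sub_le (measurable_deriv β) (measurable_deriv f) hβ' hLip hf' a b c

theorem stmt5 (β : ℝ → ℝ) (hβ : ContDiff ℝ 2 β)
    (hconv : ConvexOn ℝ Set.univ β) (hβ' : ∀ r, |deriv β r| ≤ 1)
    (Mβ : ℝ) (hβ'' : ∀ r, |deriv (deriv β) r| ≤ Mβ)
    (L_f : ℝ) (f : ℝ → ℝ) (hf : Differentiable ℝ f)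
    (hlip : ∀ x y : ℝ, |f x - f y| ≤ L_f * |x - y|)
    (hf' : ∀ r, |deriv f r| ≤ L_f)
    (Fβ : ℝ → ℝ → ℝ)
    (hFβ : ∀ a b, Fβ a b = ∫ r in b..a, deriv β (r - b) * deriv f r) :
    ∃ C : ℝ, 0 ≤ C ∧ ∀ a b c : ℝ, |Fβ a b - Fβ a c| ≤ C * |b - c| * (1 + |a - b|) :=
  stmt5_general β hβ hβ' Mβ hβ'' L_f f hf' Fβ hFβ
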